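/- arXiv:1707.09954 — 3 statements merged into one kernel-verified Lean document; each statement's English description precedes it below -/
import Mathlib

section
/- Let α > 0, β > 0 and γ ≠ 0 be real numbers. Then the function u(x,t) = (105α²/(169γβ)) · sech⁴( (1/2)√(α/(13β)) · (x − (36α²/(169β)) t) ) satisfies the fifth-order Korteweg–de Vries equation u_t + γ u u_x + α u_xxx = β u_xxxxx at every point (x,t) ∈ ℝ². -/
/-!
The profile is a travelling wave `A · φ(k (x - c t))` with `φ = sech⁴`, so the equation reduces to
an identity between `φ'`, `φ'''` and `φ⁽⁵⁾`. Differentiation maps `sechⁿ` to `sinh · sechⁿ⁺¹` and,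
thanks to `sinh² = cosh² - 1`, maps `sinh · sechⁿ⁺¹` back into the span of `sechⁿ⁺²` and `sechⁿ`;
hence `φ'`, `φ'''`, `φ⁽⁵⁾` are explicit combinations of `sinh · sech⁵`, `sinh · sech⁷`,
`sinh · sech⁹`. Matching these three coefficients is exactly the three conditions
`k² = α / (52β)`, `c = 36α² / (169β)` and `γA = 105α² / (169β)`.
-/

open Real

theorem Real.hasDerivAt_inv_cosh_pow (n : ℕ) (y : ℝ) :
    HasDerivAt (fun y => (cosh y)⁻¹ ^ n) (-n * (sinh y * (cosh y)⁻¹ ^ (n + 1))) y := by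
  rcases n with _ | n
  · simpa using hasDerivAt_const y (1 : ℝ)
  have h := ((hasDerivAt_cosh y).inv (cosh_pos y).ne').pow (n + 1)
  refine h.congr_deriv ?_
  simp only [Pi.inv_apply, add_tsub_cancel_right, inv_pow]
  field_simp
  ring

theorem Real.hasDerivAt_sinh_mul_inv_cosh_pow (n : ℕ) (y : ℝ) :
    HasDerivAt (fun y => sinh y * (cosh y)⁻¹ ^ (n + 1))
      ((n + 1) * (cosh y)⁻¹ ^ (n + 2) - n * (cosh y)⁻¹ ^ n) y := by
  have h := (hasDerivAt_sinh y).mul (hasDerivAt_inv_cosh_pow (n + 1) y)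
  refine h.congr_deriv ?_
  have hc : cosh y * (cosh y)⁻¹ = 1 := mul_inv_cancel₀ (cosh_pos y).ne'
  push_cast
  linear_combination (-(n + 1) * (cosh y)⁻¹ ^ (n + 2)) * sinh_sq y
    + (cosh y)⁻¹ ^ n * (1 - (n + 1) * (cosh y * (cosh y)⁻¹ + 1)) * hc

theorem Real.iteratedDeriv_inv_cosh_pow_four (y : ℝ) :
    iteratedDeriv 1 (fun y => (cosh y)⁻¹ ^ 4) y = -4 * (sinh y * (cosh y)⁻¹ ^ 5) ∧
    iteratedDeriv 3 (fun y => (cosh y)⁻¹ ^ 4) y =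
      -64 * (sinh y * (cosh y)⁻¹ ^ 5) + 120 * (sinh y * (cosh y)⁻¹ ^ 7) ∧
    iteratedDeriv 5 (fun y => (cosh y)⁻¹ ^ 4) y =
      -1024 * (sinh y * (cosh y)⁻¹ ^ 5) + 6240 * (sinh y * (cosh y)⁻¹ ^ 7)
        - 6720 * (sinh y * (cosh y)⁻¹ ^ 9) := by
  have d1 : deriv (fun y => (cosh y)⁻¹ ^ 4) = fun y => -4 * (sinh y * (cosh y)⁻¹ ^ 5) :=
    funext fun y => (hasDerivAt_inv_cosh_pow 4 y).deriv.trans (by norm_num)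
  have d2 : deriv (fun y => -4 * (sinh y * (cosh y)⁻¹ ^ 5)) =
      fun y => 16 * (cosh y)⁻¹ ^ 4 - 20 * (cosh y)⁻¹ ^ 6 :=
    funext fun y => ((hasDerivAt_sinh_mul_inv_cosh_pow 4 y).const_mul (-4)).deriv.trans
      (by push_cast; ring)
  have d3 : deriv (fun y => 16 * (cosh y)⁻¹ ^ 4 - 20 * (cosh y)⁻¹ ^ 6) =
      fun y => -64 * (sinh y * (cosh y)⁻¹ ^ 5) + 120 * (sinh y * (cosh y)⁻¹ ^ 7) :=
    funext fun y => (((hasDerivAt_inv_cosh_pow 4 y).const_mul 16).sub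
      ((hasDerivAt_inv_cosh_pow 6 y).const_mul 20)).deriv.trans (by push_cast; ring)
  have d4 : deriv (fun y => -64 * (sinh y * (cosh y)⁻¹ ^ 5) + 120 * (sinh y * (cosh y)⁻¹ ^ 7)) =
      fun y => 256 * (cosh y)⁻¹ ^ 4 - 1040 * (cosh y)⁻¹ ^ 6 + 840 * (cosh y)⁻¹ ^ 8 :=
    funext fun y => (((hasDerivAt_sinh_mul_inv_cosh_pow 4 y).const_mul (-64)).add
      ((hasDerivAt_sinh_mul_inv_cosh_pow 6 y).const_mul 120)).deriv.trans (by push_cast; ring)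
  have d5 : deriv (fun y => 256 * (cosh y)⁻¹ ^ 4 - 1040 * (cosh y)⁻¹ ^ 6 + 840 * (cosh y)⁻¹ ^ 8) =
      fun y => -1024 * (sinh y * (cosh y)⁻¹ ^ 5) + 6240 * (sinh y * (cosh y)⁻¹ ^ 7)
        - 6720 * (sinh y * (cosh y)⁻¹ ^ 9) :=
    funext fun y => ((((hasDerivAt_inv_cosh_pow 4 y).const_mul 256).sub
      ((hasDerivAt_inv_cosh_pow 6 y).const_mul 1040)).add
      ((hasDerivAt_inv_cosh_pow 8 y).const_mul 840)).deriv.trans (by push_cast; ring)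
  simp only [iteratedDeriv_succ, iteratedDeriv_zero, d1, d2, d3, d4, d5, and_self]

theorem iteratedDeriv_comp_mul_sub {𝕜 : Type*} [NontriviallyNormedField 𝕜] {f : 𝕜 → 𝕜} {n : ℕ}
    (hf : ContDiff 𝕜 n f) (k s x : 𝕜) :
    iteratedDeriv n (fun x => f (k * (x - s))) x = k ^ n * iteratedDeriv n f (k * (x - s)) := by
  rw [iteratedDeriv_comp_sub_const n (fun z => f (k * z)), iteratedDeriv_comp_const_mul hf]

theorem deriv_comp_mul_const_sub_mul {𝕜 : Type*} [NontriviallyNormedField 𝕜] {f : 𝕜 → 𝕜}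
    {k x c t : 𝕜} (hf : DifferentiableAt 𝕜 f (k * (x - c * t))) :
    deriv (fun t => f (k * (x - c * t))) t = -(k * c) * deriv f (k * (x - c * t)) := by
  have hlin : HasDerivAt (fun t => k * (x - c * t)) (-(k * c)) t := by
    simpa using ((hasDerivAt_id t).const_mul c |>.const_sub x).const_mul k
  exact (hf.hasDerivAt.comp t hlin).deriv.trans (mul_comm _ _)

/-- The sech⁴ profile
`u(x,t) = (105α²/(169γβ)) · sech⁴((1/2)√(α/(13β)) (x − (36α²/(169β)) t))`
solves the fifth-order KdV equation `u_t + γ u u_x + α u_xxx = β u_xxxxx`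
for all `(x,t) ∈ ℝ²`, when `α > 0`, `β > 0`, `γ ≠ 0`. -/
theorem fifth_order_kdv_sech4_soliton
    (α β γ : ℝ) (hα : 0 < α) (hβ : 0 < β) (hγ : γ ≠ 0)
    (u : ℝ → ℝ → ℝ)
    (hu : ∀ x t : ℝ, u x t =
      105 * α ^ 2 / (169 * γ * β) *
        (1 / Real.cosh ((1 / 2) * Real.sqrt (α / (13 * β)) *
          (x - 36 * α ^ 2 / (169 * β) * t))) ^ 4) :
    ∀ x t : ℝ,
      deriv (fun t' => u x t') t
        + γ * u x t * deriv (fun x' => u x' t) x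
        + α * iteratedDeriv 3 (fun x' => u x' t) x
      = β * iteratedDeriv 5 (fun x' => u x' t) x := by
  intro x t
  set k := 1 / 2 * √(α / (13 * β))
  set c := 36 * α ^ 2 / (169 * β)
  set A := 105 * α ^ 2 / (169 * γ * β)
  have hk : k ^ 2 = α / (52 * β) := by
    rw [mul_pow, sq_sqrt (by positivity)]
    ring
  have hsmooth (n : ℕ) : ContDiff ℝ n fun y => (cosh y)⁻¹ ^ 4 :=
    (contDiff_cosh.inv fun y => (cosh_pos y).ne').pow 4
  have hx : (fun x' => u x' t) = fun x' => A * (cosh (k * (x' - c * t)))⁻¹ ^ 4 := by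
    simp only [hu, one_div]
  have ht : (fun t' => u x t') = fun t' => A * (cosh (k * (x - c * t')))⁻¹ ^ 4 := by
    simp only [hu, one_div]
  obtain ⟨h1, h3, h5⟩ := iteratedDeriv_inv_cosh_pow_four (k * (x - c * t))
  rw [hx, ht, hu, deriv_const_mul_field, deriv_comp_mul_const_sub_mul
    ((hsmooth 1).differentiable one_ne_zero).differentiableAt]
  simp only [iteratedDeriv_const_mul_field, iteratedDeriv_comp_mul_sub (hsmooth _),
    ← iteratedDeriv_one, h1, h3, h5]
  rw [show k ^ 3 = k ^ 2 * k by ring, show k ^ 5 = (k ^ 2) ^ 2 * k by ring, hk]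
  simp only [one_div, c, A]
  field_simp
  ring
end

section
/- Let γ ≠ 0 and α > 0, and for c > 0 let φ_c(ξ) = (3c/γ) · sech²( (1/2)√(c/α) ξ ). Then the map c ↦ ∫_ℝ φ_c(ξ)² dξ = 24 α^{1/2} c^{3/2}/γ² is differentiable on (0,∞) with derivative 36 α^{1/2} c^{1/2}/γ² > 0; in particular the squared L² norm of the solitary wave is a strictly increasing function of the wave speed c on (0,∞). -/
/-!
Since `tanh' = sech² = 1 - tanh²`, the function `tanh - tanh³ / 3` is an antiderivative of
`sech⁴` with limits `∓ 2/3` at `∓∞`, so `∫ sech⁴ = 4/3`. Rescaling by `k = √(c/α) / 2` gives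
`∫ φ_c² = (3c/γ)² · 4/(3k) = 24 √α c^{3/2} / γ²`, whose derivative in `c` is positive; hence the
squared `L²` norm is strictly increasing in `c`.
-/

open MeasureTheory Real Filter Topology Set

namespace Real

theorem tanh_eq_one_sub_two_div (x : ℝ) : tanh x = 1 - 2 / (exp (2 * x) + 1) := by
  have hx : exp (2 * x) = exp x * exp x := by rw [← exp_add]; ring_nf
  have := exp_pos x
  rw [tanh_eq_sinh_div_cosh, sinh_eq, cosh_eq, hx, exp_neg]
  field_simp
  ring

theorem tendsto_tanh_atTop : Tendsto tanh atTop (𝓝 1) := by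
  have h : Tendsto (fun x : ℝ => exp (2 * x) + 1) atTop atTop :=
    tendsto_atTop_add_const_right _ 1 (tendsto_exp_atTop.comp (tendsto_id.const_mul_atTop two_pos))
  have h2 := tendsto_const_nhds (x := (1 : ℝ)).sub (tendsto_const_nhds (x := (2 : ℝ)).div_atTop h)
  rw [sub_zero] at h2
  exact h2.congr fun x => (tanh_eq_one_sub_two_div x).symm

theorem tendsto_tanh_atBot : Tendsto tanh atBot (𝓝 (-1)) := by
  simpa [Function.comp_def] using (tendsto_tanh_atTop.comp tendsto_neg_atBot_atTop).neg

theorem one_div_cosh_sq (x : ℝ) : (1 / cosh x) ^ 2 = 1 - tanh x ^ 2 := by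
  have := cosh_pos x
  rw [tanh_eq_sinh_div_cosh]
  field_simp
  linarith [cosh_sq x]

theorem hasDerivAt_tanh (x : ℝ) : HasDerivAt tanh ((1 / cosh x) ^ 2) x := by
  have h := (hasDerivAt_sinh x).div (hasDerivAt_cosh x) (cosh_pos x).ne'
  rw [show tanh = sinh / cosh from funext tanh_eq_sinh_div_cosh]
  refine h.congr_deriv ?_
  have := (cosh_pos x).ne'
  field_simp
  linarith [cosh_sq x]

end Real

theorem MeasureTheory.integrable_deriv_of_nonneg {g g' : ℝ → ℝ} {m n : ℝ}
    (hderiv : ∀ x, HasDerivAt g (g' x) x) (hg' : ∀ x, 0 ≤ g' x)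
    (hbot : Tendsto g atBot (𝓝 m)) (htop : Tendsto g atTop (𝓝 n)) : Integrable g' := by
  have hcont : Continuous g := continuous_iff_continuousAt.2 fun x => (hderiv x).continuousAt
  have hint (i : ℝ) : ∫ x in -i..i, ‖g' x‖ = g i - g (-i) := by
    simp_rw [Real.norm_of_nonneg (hg' _)]
    exact intervalIntegral.integral_eq_sub_of_hasDerivAt (fun x _ => hderiv x)
      (intervalIntegral.intervalIntegrable_deriv_of_nonneg hcont.continuousOn
        (fun x _ => hderiv x) (fun x _ => hg' x))
  refine integrable_of_intervalIntegral_norm_tendsto (n - m)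
    (fun i => intervalIntegral.integrableOn_deriv_of_nonneg hcont.continuousOn
      (fun x _ => hderiv x) (fun x _ => hg' x)) tendsto_neg_atTop_atBot tendsto_id ?_
  exact (htop.sub (hbot.comp tendsto_neg_atTop_atBot)).congr fun i => (hint i).symm

namespace Real

theorem integral_one_div_cosh_pow_four : ∫ x, (1 / cosh x) ^ 4 = 4 / 3 := by
  have hderiv (x : ℝ) : HasDerivAt (fun x => tanh x - tanh x ^ 3 / 3) ((1 / cosh x) ^ 4) x := by
    refine ((hasDerivAt_tanh x).sub (((hasDerivAt_tanh x).pow 3).div_const 3)).congr_deriv ?_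
    rw [show (4 : ℕ) = 2 * 2 from rfl, pow_mul, one_div_cosh_sq]
    ring
  have hbot := tendsto_tanh_atBot.sub ((tendsto_tanh_atBot.pow 3).div_const 3)
  have htop := tendsto_tanh_atTop.sub ((tendsto_tanh_atTop.pow 3).div_const 3)
  rw [integral_of_hasDerivAt_of_tendsto hderiv
    (integrable_deriv_of_nonneg hderiv (fun x => by positivity) hbot htop) hbot htop]
  norm_num

theorem integral_one_div_cosh_mul_pow_four (k : ℝ) :
    ∫ x, (1 / cosh (k * x)) ^ 4 = 4 / (3 * |k|) := by
  rw [Measure.integral_comp_mul_left (fun x => (1 / cosh x) ^ 4) k,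
    integral_one_div_cosh_pow_four, smul_eq_mul, abs_inv]
  ring

end Real

noncomputable def kdvSoliton (α γ c ξ : ℝ) : ℝ :=
  3 * c / γ * (1 / cosh ((1 / 2) * √(c / α) * ξ)) ^ 2

theorem integral_kdvSoliton_sq {α c : ℝ} (hα : 0 < α) (hc : 0 < c) (γ : ℝ) :
    ∫ ξ, kdvSoliton α γ c ξ ^ 2 = 24 * α ^ ((1 : ℝ) / 2) * c ^ ((3 : ℝ) / 2) / γ ^ 2 := by
  have hsech : ∫ ξ, kdvSoliton α γ c ξ ^ 2
      = (3 * c / γ) ^ 2 * ∫ ξ, (1 / cosh ((1 / 2) * √(c / α) * ξ)) ^ 4 := by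
    rw [← integral_const_mul]
    simp only [kdvSoliton]
    ring_nf
  have hsc := sqrt_pos.2 hc
  have hsa := sqrt_pos.2 hα
  rw [hsech, integral_one_div_cosh_mul_pow_four, abs_of_pos (by positivity), sqrt_div' _ hα.le,
    ← sqrt_eq_rpow, rpow_div_two_eq_sqrt _ hc.le, show (3 : ℝ) = (3 : ℕ) by norm_num, rpow_natCast]
  nth_rw 1 [← sq_sqrt hc.le]
  field_simp
  ring

/-- For `γ ≠ 0`, `α > 0`, the map
`c ↦ ∫ℝ φ_c(ξ)² dξ = 24 α^{1/2} c^{3/2}/γ²` (where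
`φ_c(ξ) = (3c/γ) sech²((1/2)√(c/α) ξ)`) is differentiable on `(0,∞)` with
positive derivative `36 α^{1/2} c^{1/2}/γ²`; in particular, the squared `L²`
norm of the solitary wave is strictly increasing in the wave speed `c`. -/
theorem kdv_soliton_L2_norm_increasing_in_speed
    (α γ : ℝ) (hγ : γ ≠ 0) (hα : 0 < α)
    (F : ℝ → ℝ)
    (hF : ∀ c : ℝ, F c =
      ∫ ξ : ℝ, (3 * c / γ *
        (1 / Real.cosh ((1 / 2) * Real.sqrt (c / α) * ξ)) ^ 2) ^ 2) :
    (∀ c : ℝ, 0 < c →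
        F c = 24 * α ^ ((1 : ℝ) / 2) * c ^ ((3 : ℝ) / 2) / γ ^ 2
        ∧ HasDerivAt F (36 * α ^ ((1 : ℝ) / 2) * c ^ ((1 : ℝ) / 2) / γ ^ 2) c
        ∧ 0 < 36 * α ^ ((1 : ℝ) / 2) * c ^ ((1 : ℝ) / 2) / γ ^ 2)
      ∧ StrictMonoOn F (Set.Ioi 0) := by
  have hF_eq (c : ℝ) (hc : 0 < c) : F c = 24 * α ^ ((1 : ℝ) / 2) * c ^ ((3 : ℝ) / 2) / γ ^ 2 :=
    (hF c).trans (integral_kdvSoliton_sq hα hc γ)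
  have hderiv (c : ℝ) (hc : 0 < c) :
      HasDerivAt F (36 * α ^ ((1 : ℝ) / 2) * c ^ ((1 : ℝ) / 2) / γ ^ 2) c := by
    have h := ((hasDerivAt_rpow_const (x := c) (p := 3 / 2) (Or.inr (by norm_num))).const_mul
      (24 * α ^ ((1 : ℝ) / 2))).div_const (γ ^ 2)
    refine (h.congr_deriv (by norm_num; ring)).congr_of_eventuallyEq ?_
    filter_upwards [Ioi_mem_nhds hc] with x hx using hF_eq x hx
  have hpos (c : ℝ) (hc : 0 < c) :
      0 < 36 * α ^ ((1 : ℝ) / 2) * c ^ ((1 : ℝ) / 2) / γ ^ 2 := by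
    positivity
  refine ⟨fun c hc => ⟨hF_eq c hc, hderiv c hc, hpos c hc⟩, ?_⟩
  refine strictMonoOn_of_deriv_pos (convex_Ioi 0)
    (fun c hc => (hderiv c hc).continuousAt.continuousWithinAt) fun c hc => ?_
  rw [interior_Ioi] at hc
  rw [(hderiv c hc).deriv]
  exact hpos c hc
end

section
/- For each integer j ≥ 0 define b_j = 1680 (2j + 11/2) (j+1)² (j + 9/2)² (2j)! / ( [ (2j+4)(2j+5)(2j+6)(2j+7) − 1680 ] · (2j+10)! ). Then b_j > 0 for every j ≥ 1, the series Σ_{j=1}^∞ b_j converges, and Σ_{j=1}^∞ b_j < (11/10!) · (81/4). -/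
/-!
Since `(2j+10)!/(2j)!` is the product `(2j+1)⋯(2j+10)`, the term `b_j` is a rational function
of `j` of degree `-9`. On `j ≥ 1` it is positive and bounded by the telescoping majorant
`1/(20000 j) - 1/(20000 (j+1))`, so the partial sums of `Σ_{j≥1} b_j` stay below
`1/20000 < (11/10!)(81/4)`.
-/

open Finset Nat

theorem cast_factorial_add_eq_mul_prod {R : Type*} [CommSemiring R] (n k : ℕ) :
    ((n + k)! : R) = n ! * ∏ i ∈ range k, ((n : R) + i + 1) := by
  rw [← factorial_mul_ascFactorial, ascFactorial_eq_prod_range]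
  push_cast
  congr 1
  exact prod_congr rfl fun i _ => by ring

noncomputable def gegenbauerRatio (x : ℝ) : ℝ :=
  1680 * (2 * x + 11 / 2) * (x + 1) ^ 2 * (x + 9 / 2) ^ 2 /
    (((2 * x + 4) * (2 * x + 5) * (2 * x + 6) * (2 * x + 7) - 1680) *
      ∏ i ∈ range 10, (2 * x + i + 1))

theorem gegenbauerRatio_natCast (j : ℕ) :
    gegenbauerRatio j =
      1680 * (2 * (j : ℝ) + 11 / 2) * ((j : ℝ) + 1) ^ 2 * ((j : ℝ) + 9 / 2) ^ 2
          * (Nat.factorial (2 * j) : ℝ) /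
        (((2 * (j : ℝ) + 4) * (2 * (j : ℝ) + 5) * (2 * (j : ℝ) + 6)
            * (2 * (j : ℝ) + 7) - 1680) * (Nat.factorial (2 * j + 10) : ℝ)) := by
  have hfac : ((2 * j)! : ℝ) ≠ 0 := by positivity
  rw [cast_factorial_add_eq_mul_prod, gegenbauerRatio, mul_left_comm _ ((2 * j)! : ℝ),
    mul_comm _ ((2 * j)! : ℝ), mul_div_mul_left _ _ hfac]
  push_cast
  rfl

theorem gegenbauer_denom_pos {x : ℝ} (hx : 1 ≤ x) :
    0 < (2 * x + 4) * (2 * x + 5) * (2 * x + 6) * (2 * x + 7) - 1680 := by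
  have : (6 * 7 * 8 * 9 : ℝ) ≤ (2 * x + 4) * (2 * x + 5) * (2 * x + 6) * (2 * x + 7) := by
    gcongr <;> linarith
  linarith

theorem gegenbauerRatio_pos {x : ℝ} (hx : 1 ≤ x) : 0 < gegenbauerRatio x := by
  have hD := gegenbauer_denom_pos hx
  have hP : 0 < ∏ i ∈ range 10, (2 * x + i + 1) := prod_pos fun i _ => by positivity
  unfold gegenbauerRatio
  positivity

theorem gegenbauerRatio_le {x : ℝ} (hx : 1 ≤ x) :
    gegenbauerRatio x ≤ 1 / (20000 * x) - 1 / (20000 * (x + 1)) := by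
  have hD := gegenbauer_denom_pos hx
  have hP : 0 < ∏ i ∈ range 10, (2 * x + i + 1) := prod_pos fun i _ => by positivity
  have hsub : 1 / (20000 * x) - 1 / (20000 * (x + 1)) = 1 / (20000 * x * (x + 1)) := by
    field_simp; ring
  rw [hsub, gegenbauerRatio, div_le_div_iff₀ (by positivity) (by positivity)]
  -- after the shift `x = 1 + t` every coefficient of the difference is nonnegative
  obtain ⟨t, ht, rfl⟩ : ∃ t : ℝ, 0 ≤ t ∧ x = 1 + t := ⟨x - 1, by linarith, by ring⟩
  refine sub_nonneg.1 ?_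
  simp only [prod_range_succ, prod_range_zero]
  push_cast
  ring_nf
  positivity

theorem sum_range_le_of_le_sub_succ {α : Type*} [AddCommGroup α] [PartialOrder α]
    [IsOrderedAddMonoid α] {f g : ℕ → α} (hg : ∀ n, 0 ≤ g n)
    (hfg : ∀ n, f n ≤ g n - g (n + 1)) (n : ℕ) : ∑ i ∈ range n, f i ≤ g 0 :=
  calc ∑ i ∈ range n, f i ≤ ∑ i ∈ range n, (g i - g (i + 1)) := sum_le_sum fun i _ => hfg i
    _ = g 0 - g n := sum_range_sub' g n
    _ ≤ g 0 := sub_le_self _ (hg n)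

/-- With
`b_j = 1680 (2j+11/2)(j+1)²(j+9/2)² (2j)! / ([(2j+4)(2j+5)(2j+6)(2j+7) − 1680] (2j+10)!)`,
every `b_j` with `j ≥ 1` is positive, the series `Σ_{j≥1} b_j` converges, and
`Σ_{j=1}^∞ b_j < (11/10!) (81/4)`. -/
theorem gegenbauer_series_tail_bound
    (b : ℕ → ℝ)
    (hb : ∀ j : ℕ, b j =
      1680 * (2 * (j : ℝ) + 11 / 2) * ((j : ℝ) + 1) ^ 2 * ((j : ℝ) + 9 / 2) ^ 2
          * (Nat.factorial (2 * j) : ℝ) /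
        (((2 * (j : ℝ) + 4) * (2 * (j : ℝ) + 5) * (2 * (j : ℝ) + 6)
            * (2 * (j : ℝ) + 7) - 1680) * (Nat.factorial (2 * j + 10) : ℝ))) :
    (∀ j : ℕ, 1 ≤ j → 0 < b j)
      ∧ Summable (fun j : ℕ => b (j + 1))
      ∧ ∑' j : ℕ, b (j + 1) < 11 / (Nat.factorial 10 : ℝ) * (81 / 4) := by
  have hb_eq : ∀ j : ℕ, b j = gegenbauerRatio j := fun j =>
    (hb j).trans (gegenbauerRatio_natCast j).symm
  have hpos : ∀ j : ℕ, 1 ≤ j → 0 < b j := fun j hj => by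
    rw [hb_eq]
    exact gegenbauerRatio_pos (by exact_mod_cast hj)
  have hnonneg : ∀ j : ℕ, 0 ≤ b (j + 1) := fun j => (hpos (j + 1) (Nat.le_add_left 1 j)).le
  set g : ℕ → ℝ := fun n => 1 / (20000 * ((n : ℝ) + 1))
  have hg : ∀ n, 0 ≤ g n := fun n => by positivity
  have hbg : ∀ j, b (j + 1) ≤ g j - g (j + 1) := fun j => by
    have := gegenbauerRatio_le (x := j + 1) (by linarith [(j.cast_nonneg : (0 : ℝ) ≤ j)])
    simpa [hb_eq, g] using this
  have hpartial := sum_range_le_of_le_sub_succ hg hbg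
  refine ⟨hpos, summable_of_sum_range_le hnonneg hpartial, ?_⟩
  calc ∑' j, b (j + 1) ≤ g 0 := Real.tsum_le_of_sum_range_le hnonneg hpartial
    _ < 11 / (Nat.factorial 10 : ℝ) * (81 / 4) := by norm_num [g, Nat.factorial]
end
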